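/- arXiv:2406.09955 — 2 statements merged into one kernel-verified Lean document; each statement's English description precedes it below -/
import Mathlib

section
/- Let (T_t)_{t≥0} be a uniformly continuous semigroup of sublinear transition operators on ℬ and fix t ≥ 0. Then the sequence of operators (n(T_{t/n} − I))_{n∈ℕ} is Cauchy with respect to the operator seminorm, and its limit ln T_t := lim_{n→∞} n(T_{t/n} − I) is a bounded sublinear rate operator. -/
open Filter Topology BoundedContinuousFunction ENNReal NNReal

/-- The space of (possibly nonlinear) operators on the Banach space `X →ᵇ ℝ`
of bounded (continuous, i.e. with `X` discrete: all) real-valued functions. -/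
abbrev Op (X : Type*) [TopologicalSpace X] :=
  BoundedContinuousFunction X ℝ → BoundedContinuousFunction X ℝ

/-- The operator seminorm `‖A‖ = sup {‖A f‖/‖f‖ : f ≠ 0}`, a value in `[0,∞]`. -/
noncomputable def opSemiNorm {X : Type*} [TopologicalSpace X] (A : Op X) : ℝ≥0∞ :=
  ⨆ (f : BoundedContinuousFunction X ℝ) (_ : f ≠ 0), (‖A f‖₊ : ℝ≥0∞) / (‖f‖₊ : ℝ≥0∞)

/-- The operator norm distance `d(A,B) = ‖A 0 − B 0‖∞ + ‖A − B‖`. -/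
noncomputable def opDist {X : Type*} [TopologicalSpace X] (A B : Op X) : ℝ≥0∞ :=
  (‖A 0 - B 0‖₊ : ℝ≥0∞) + opSemiNorm (A - B)

/-- Sublinear transition operator: (T1) positive homogeneity, (T2) subadditivity,
(T3) `T f ≤ sup f` pointwise. -/
def IsSublinearTransition {X : Type*} [TopologicalSpace X] (T : Op X) : Prop :=
  (∀ (c : ℝ), 0 ≤ c → ∀ f, T (c • f) = c • T f) ∧
  (∀ f g, ∀ x, T (f + g) x ≤ T f x + T g x) ∧
  (∀ f, ∀ x, T f x ≤ ⨆ y, f y)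

/-- Sublinear rate operator: (Q1) positive homogeneity, (Q2) subadditivity,
(Q3) constants map to zero, (Q4) positive maximum principle. -/
def IsSublinearRate {X : Type*} [TopologicalSpace X] (Q : Op X) : Prop :=
  (∀ (c : ℝ), 0 ≤ c → ∀ f, Q (c • f) = c • Q f) ∧
  (∀ f g, ∀ x, Q (f + g) x ≤ Q f x + Q g x) ∧
  (∀ (c : ℝ), Q (BoundedContinuousFunction.const X c) = 0) ∧
  (∀ f, ∀ x : X, (⨆ y, f y) = f x → 0 ≤ f x → Q f x ≤ 0)

/-- The Euler approximation `(I + (t/n) Q)^n` (n-fold composition). -/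
noncomputable def euler {X : Type*} [TopologicalSpace X] (Q : Op X) (t : ℝ) (n : ℕ) : Op X :=
  (fun f => f + (t / (n : ℝ)) • Q f)^[n]

/-- Uniform continuity of a semigroup `(S_t)_{t ≥ 0}`:
`‖S_s − S_t‖ → 0` as `s → t` (within `s ≥ 0`), for every `t ≥ 0`. -/
def IsUniformlyContinuousSG {X : Type*} [TopologicalSpace X] (S : ℝ → Op X) : Prop :=
  ∀ t : ℝ, 0 ≤ t →
    Tendsto (fun s => opSemiNorm (S s - S t)) (nhdsWithin t (Set.Ici 0)) (nhds 0)

/-- The indicator function `1_x` of the singleton `{x}`. -/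
noncomputable def indic {X : Type*} [TopologicalSpace X] [DiscreteTopology X] (x : X) :
    BoundedContinuousFunction X ℝ :=
  BoundedContinuousFunction.ofNormedAddCommGroup
    (Set.indicator {x} (fun _ => (1 : ℝ))) continuous_of_discreteTopology 1
    (by
      intro y
      classical
      rw [Set.indicator_apply]
      split_ifs <;> simp)

/-- Downward continuity (continuity from above) of an operator. -/
def DownwardContinuous {X : Type*} [TopologicalSpace X] (A : Op X) : Prop :=
  ∀ (f : ℕ → BoundedContinuousFunction X ℝ) (g : BoundedContinuousFunction X ℝ),
    (∀ n x, f (n + 1) x ≤ f n x) →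
    (∀ x, Tendsto (fun n => f n x) atTop (nhds (g x))) →
    ∀ x, Tendsto (fun n => A (f n) x) atTop (nhds (A g x))

/-!
Uniform continuity at `0` gives `‖T s - I‖ ≤ 1/2` on some `[0, t₀]`. A sublinear transition
operator `S` moves differences almost rigidly: `‖(S g - S f) - (g - f)‖ ≤ ‖S - I‖ ‖g - f‖`.
Telescoping `T (m s) - I` against `m (T s - I)` with this estimate upgrades the bound to the
linear one `‖T s - I‖ ≤ K s` for all `s ≥ 0`; the same telescoping with step `t / (n m)` gives
`‖n (T (t/n) - I) - n m (T (t/(n m)) - I)‖ ≤ K² t² / n`. Hence the approximations converge at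
rate `O(1/n)` in the Banach space of bounded functions, and the axioms of a sublinear rate
operator, satisfied by each `n (T (t/n) - I)`, pass to the pointwise limit.
-/

section OpSemiNorm
variable {X : Type*} [TopologicalSpace X]

theorem opSemiNorm_le_ofReal {A : Op X} {c : ℝ} (hc : 0 ≤ c)
    (h : ∀ f, ‖A f‖ ≤ c * ‖f‖) : opSemiNorm A ≤ ENNReal.ofReal c := by
  refine iSup₂_le fun f hf => ?_
  rw [ENNReal.div_le_iff (by simpa using hf) ENNReal.coe_ne_top, ← ENNReal.ofReal_coe_nnreal,
    ← ENNReal.ofReal_coe_nnreal (p := ‖f‖₊), ← ENNReal.ofReal_mul hc]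
  exact ENNReal.ofReal_le_ofReal (h f)

theorem norm_apply_le_of_opSemiNorm_le {A : Op X} {c : ℝ} (hc : 0 ≤ c)
    (hA : opSemiNorm A ≤ ENNReal.ofReal c) {f : X →ᵇ ℝ} (hf : f ≠ 0) :
    ‖A f‖ ≤ c * ‖f‖ := by
  have h := (le_iSup₂ (f := fun g (_ : g ≠ 0) => (‖A g‖₊ : ℝ≥0∞) / ‖g‖₊) f hf).trans hA
  rw [ENNReal.div_le_iff (by simpa using hf) ENNReal.coe_ne_top, ← ENNReal.ofReal_coe_nnreal,
    ← ENNReal.ofReal_coe_nnreal (p := ‖f‖₊), ← ENNReal.ofReal_mul hc,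
    ENNReal.ofReal_le_ofReal_iff (by positivity)] at h
  exact_mod_cast h

end OpSemiNorm

namespace IsSublinearTransition
variable {X : Type*} [TopologicalSpace X] {S : Op X}

theorem map_zero (hS : IsSublinearTransition S) : S 0 = 0 := by
  simpa using hS.1 0 le_rfl 0

theorem sub_le_map_sub (hS : IsSublinearTransition S) (f g : X →ᵇ ℝ) (x : X) :
    S f x - S g x ≤ S (f - g) x := by
  have h := hS.2.1 (f - g) g x
  rw [sub_add_cancel] at h
  linarith

theorem apply_le_norm (hS : IsSublinearTransition S) (f : X →ᵇ ℝ) (x : X) : S f x ≤ ‖f‖ := by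
  have : Nonempty X := ⟨x⟩
  exact (hS.2.2 f x).trans <| ciSup_le fun y => (le_abs_self _).trans (f.norm_coe_le_norm y)

theorem norm_map_le (hS : IsSublinearTransition S) (f : X →ᵇ ℝ) : ‖S f‖ ≤ ‖f‖ := by
  refine (norm_le (norm_nonneg f)).2 fun x => abs_le.2 ⟨?_, hS.apply_le_norm f x⟩
  have h := (hS.sub_le_map_sub 0 f x).trans (hS.apply_le_norm (0 - f) x)
  rw [hS.map_zero, zero_sub, norm_neg] at h
  simp only [BoundedContinuousFunction.coe_zero, Pi.zero_apply, zero_sub] at h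
  linarith

theorem map_const (hS : IsSublinearTransition S) (c : ℝ) : S (const X c) = const X c := by
  ext x
  have : Nonempty X := ⟨x⟩
  have hle : S (const X c) x ≤ c := by simpa using hS.2.2 (const X c) x
  have hneg : S (-const X c) x ≤ -c := by simpa using hS.2.2 (-const X c) x
  have hge := hS.sub_le_map_sub 0 (const X c) x
  rw [hS.map_zero, zero_sub] at hge
  simp only [BoundedContinuousFunction.coe_zero, Pi.zero_apply, zero_sub] at hge
  exact le_antisymm hle (by rw [const_apply']; linarith)

theorem norm_map_sub_map_sub_sub_le (hS : IsSublinearTransition S) {c : ℝ} (hc : 0 ≤ c)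
    (hb : ∀ u, ‖S u - u‖ ≤ c * ‖u‖) (f g : X →ᵇ ℝ) :
    ‖S g - S f - (g - f)‖ ≤ c * ‖g - f‖ := by
  have one_side (f g : X →ᵇ ℝ) (x : X) : S g x - S f x - (g x - f x) ≤ c * ‖g - f‖ := by
    have h₁ := hS.sub_le_map_sub g f x
    have h₂ := (le_abs_self _).trans ((S (g - f) - (g - f)).norm_coe_le_norm x)
    simp only [BoundedContinuousFunction.sub_apply] at h₂
    linarith [hb (g - f)]
  refine (norm_le (by positivity)).2 fun x => abs_le.2 ⟨?_, by simpa using one_side f g x⟩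
  have := one_side g f x
  rw [norm_sub_rev] at this
  simp only [BoundedContinuousFunction.sub_apply]
  linarith

theorem isSublinearRate_smul_sub (hS : IsSublinearTransition S) {c : ℝ} (hc : 0 ≤ c) :
    IsSublinearRate (c • (S - id)) := by
  refine ⟨fun a ha f => ?_, fun f g x => ?_, fun a => ?_, fun f x hmax _ => ?_⟩
  · simp only [Pi.smul_apply, Pi.sub_apply, id, hS.1 a ha f]
    module
  · simp only [Pi.smul_apply, Pi.sub_apply, id, BoundedContinuousFunction.smul_apply,
      BoundedContinuousFunction.sub_apply, BoundedContinuousFunction.add_apply, smul_eq_mul]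
    nlinarith [hS.2.1 f g x]
  · simp [hS.map_const]
  · have := hS.2.2 f x
    simp only [Pi.smul_apply, Pi.sub_apply, id, BoundedContinuousFunction.smul_apply,
      BoundedContinuousFunction.sub_apply, smul_eq_mul]
    nlinarith

end IsSublinearTransition

section Limits
variable {X : Type*} [TopologicalSpace X]

theorem isSublinearRate_of_tendsto {Q : ℕ → Op X} {L : Op X}
    (hQ : ∀ n, IsSublinearRate (Q n)) (hL : ∀ f, Tendsto (fun n => Q n f) atTop (𝓝 (L f))) :
    IsSublinearRate L := by
  have hLx (f : X →ᵇ ℝ) (x : X) : Tendsto (fun n => Q n f x) atTop (𝓝 (L f x)) :=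
    ((continuous_eval_const x).tendsto _).comp (hL f)
  refine ⟨fun c hc f => ?_, fun f g x => ?_, fun c => ?_, fun f x hmax hpos => ?_⟩
  · refine tendsto_nhds_unique (hL (c • f)) ?_
    simpa only [(hQ _).1 c hc f] using (hL f).const_smul c
  · exact le_of_tendsto_of_tendsto' (hLx (f + g) x) ((hLx f x).add (hLx g x))
      fun n => (hQ n).2.1 f g x
  · exact tendsto_nhds_unique (hL _) (by simp only [(hQ _).2.2.1 c, tendsto_const_nhds])
  · exact le_of_tendsto' (hLx f x) fun n => (hQ n).2.2.2 f x hmax hpos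

theorem exists_tendsto_dist_le_of_dist_le_add {α : Type*} [PseudoMetricSpace α]
    [CompleteSpace α] {a : ℕ → α} {b : ℕ → ℝ} {N : ℕ} (hb : Tendsto b atTop (𝓝 0))
    (h : ∀ n ≥ N, ∀ m ≥ N, dist (a n) (a m) ≤ b n + b m) :
    ∃ l, Tendsto a atTop (𝓝 l) ∧ ∀ n ≥ N, dist (a n) l ≤ b n := by
  have hcauchy : CauchySeq a := by
    refine Metric.cauchySeq_iff'.2 fun ε hε => ?_
    obtain ⟨M, hM⟩ := eventually_atTop.1 (hb.eventually (gt_mem_nhds (half_pos hε)))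
    refine ⟨max N M, fun n hn => (h n (le_of_max_le_left hn) _ (le_max_left _ _)).trans_lt ?_⟩
    linarith [hM n (le_of_max_le_right hn), hM _ (le_max_right N M)]
  obtain ⟨l, hl⟩ := cauchySeq_tendsto_of_complete hcauchy
  refine ⟨l, hl, fun n hn => le_of_tendsto_of_tendsto (tendsto_const_nhds.dist hl)
    (by simpa using tendsto_const_nhds.add hb) ?_⟩
  exact eventually_atTop.2 ⟨N, fun m hm => h n hn m hm⟩

theorem exists_opSemiNorm_sub_lt_of_le {D : ℕ → Op X} {C : ℝ}
    (hD : ∀ n m : ℕ, 1 ≤ n → 1 ≤ m → opSemiNorm (D n - D m) ≤ ENNReal.ofReal (C / n + C / m))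
    {ε : ℝ≥0∞} (hε : 0 < ε) : ∃ N : ℕ, ∀ m ≥ N, ∀ n ≥ N, opSemiNorm (D m - D n) < ε := by
  have hC := tendsto_const_div_atTop_nhds_zero_nat C
  have hCC : Tendsto (fun p : ℕ × ℕ => ENNReal.ofReal (C / p.1 + C / p.2)) atTop (𝓝 0) := by
    rw [← prod_atTop_atTop_eq]
    simpa using ENNReal.tendsto_ofReal ((hC.comp tendsto_fst).add (hC.comp tendsto_snd))
  obtain ⟨N, hN⟩ := eventually_atTop_prod_self'.1 (hCC.eventually_lt_const hε)
  exact ⟨max N 1, fun m hm n hn => (hD m n (le_of_max_le_right hm) (le_of_max_le_right hn)).trans_lt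
    (hN m (le_of_max_le_left hm) n (le_of_max_le_left hn))⟩

end Limits

structure IsSublinearSemigroup {X : Type*} [TopologicalSpace X] (T : ℝ → Op X) : Prop where
  transition : ∀ t, 0 ≤ t → IsSublinearTransition (T t)
  zero : T 0 = id
  add : ∀ s t, 0 ≤ s → 0 ≤ t → T (s + t) = T s ∘ T t

namespace IsSublinearSemigroup
variable {X : Type*} [TopologicalSpace X] {T : ℝ → Op X}

theorem norm_apply_sub_sub_smul_le (hT : IsSublinearSemigroup T) {b c h : ℝ} (hc : 0 ≤ c)
    (hh : 0 ≤ h) (hb : ∀ s, 0 ≤ s → s ≤ b → ∀ u, ‖T s u - u‖ ≤ c * ‖u‖) (j : ℕ)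
    (hj : j * h ≤ b) (f : X →ᵇ ℝ) :
    ‖T (j * h) f - f - (j : ℝ) • (T h f - f)‖ ≤ j * c * ‖T h f - f‖ := by
  induction j with
  | zero => simp [hT.zero]
  | succ j ih =>
    have hjh : 0 ≤ (j : ℝ) * h := by positivity
    have hjb : (j : ℝ) * h ≤ b := by push_cast at hj; nlinarith
    have hsplit : T ((j + 1 : ℕ) * h) f - f - ((j + 1 : ℕ) : ℝ) • (T h f - f) =
        (T (j * h) (T h f) - T (j * h) f - (T h f - f)) +
          (T (j * h) f - f - (j : ℝ) • (T h f - f)) := by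
      rw [Nat.cast_succ, add_mul, one_mul, hT.add _ _ hjh hh, Function.comp_apply, add_smul,
        one_smul]
      abel
    rw [hsplit]
    calc _ ≤ c * ‖T h f - f‖ + j * c * ‖T h f - f‖ :=
          norm_add_le_of_le ((hT.transition _ hjh).norm_map_sub_map_sub_sub_le hc
            (hb _ hjh hjb) f (T h f)) (ih hjb)
      _ = _ := by push_cast; ring

theorem norm_apply_sub_le_of_le_half (hT : IsSublinearSemigroup T) {t₀ : ℝ} (ht₀ : 0 < t₀)
    (hb : ∀ s, 0 ≤ s → s ≤ t₀ → ∀ u, ‖T s u - u‖ ≤ 1 / 2 * ‖u‖) {s : ℝ} (hs : 0 ≤ s)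
    (u : X →ᵇ ℝ) : ‖T s u - u‖ ≤ 2 / t₀ * s * ‖u‖ := by
  rcases le_total t₀ s with hts | hst
  · calc ‖T s u - u‖ ≤ ‖T s u‖ + ‖u‖ := norm_sub_le _ _
      _ ≤ 2 * ‖u‖ := by linarith [(hT.transition s hs).norm_map_le u]
      _ ≤ 2 / t₀ * s * ‖u‖ := by
          gcongr
          rw [div_mul_eq_mul_div, le_div_iff₀ ht₀]
          linarith
  rcases hs.eq_or_lt with rfl | hs
  · simp [hT.zero]
  set m := ⌊t₀ / s⌋₊
  have hm1 : 1 ≤ m := Nat.le_floor (by rw [Nat.cast_one, one_le_div hs]; exact hst)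
  have hms : m * s ≤ t₀ := (le_div_iff₀ hs).1 (Nat.floor_le (by positivity))
  have hm2 : t₀ < 2 * m * s := by
    have := (div_lt_iff₀ hs).1 (Nat.lt_floor_add_one (t₀ / s))
    have : (1 : ℝ) ≤ m := by exact_mod_cast hm1
    nlinarith
  -- telescoping over `m` steps of length `s` loses only half of `m ‖T s u - u‖`
  have key : (m : ℝ) * ‖T s u - u‖ ≤ ‖u‖ := by
    have htel := hT.norm_apply_sub_sub_smul_le (by norm_num) hs.le hb m hms u
    have hsplit := norm_le_norm_add_norm_sub' ((m : ℝ) • (T s u - u)) (T (m * s) u - u)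
    rw [norm_sub_rev ((m : ℝ) • _), norm_smul, Real.norm_natCast] at hsplit
    linarith [hb _ (by positivity) hms u]
  rw [div_mul_eq_mul_div, div_mul_eq_mul_div, le_div_iff₀ ht₀]
  nlinarith [norm_nonneg (T s u - u)]

theorem exists_norm_apply_sub_le (hT : IsSublinearSemigroup T)
    (hUC : IsUniformlyContinuousSG T) :
    ∃ K, 0 ≤ K ∧ ∀ s, 0 ≤ s → ∀ u, ‖T s u - u‖ ≤ K * s * ‖u‖ := by
  have hev : ∀ᶠ s in 𝓝[≥] 0, opSemiNorm (T s - T 0) < ENNReal.ofReal (1 / 2) :=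
    (hUC 0 le_rfl).eventually_lt_const (by norm_num)
  obtain ⟨ε, hε, hball⟩ := (nhdsGE_basis_Ico (0 : ℝ)).eventually_iff.1 hev
  refine ⟨2 / (ε / 2), by positivity, fun s hs u =>
    hT.norm_apply_sub_le_of_le_half (half_pos hε) (fun s hs hsε u => ?_) hs u⟩
  rcases eq_or_ne u 0 with rfl | hu
  · simp [(hT.transition s hs).map_zero]
  · simpa [hT.zero] using
      norm_apply_le_of_opSemiNorm_le (by norm_num) (hball ⟨hs, by linarith⟩).le hu

end IsSublinearSemigroup

noncomputable def logApprox {X : Type*} [TopologicalSpace X] (T : ℝ → Op X) (t : ℝ) (n : ℕ) :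
    Op X :=
  (n : ℝ) • (T (t / n) - id)

section LogApprox
variable {X : Type*} [TopologicalSpace X] {T : ℝ → Op X} {t K : ℝ}

theorem logApprox_apply (n : ℕ) (f : X →ᵇ ℝ) :
    logApprox T t n f = (n : ℝ) • (T (t / n) f - f) := rfl

theorem IsSublinearSemigroup.isSublinearRate_logApprox (hT : IsSublinearSemigroup T)
    (ht : 0 ≤ t) (n : ℕ) : IsSublinearRate (logApprox T t n) :=
  (hT.transition _ (by positivity)).isSublinearRate_smul_sub n.cast_nonneg

theorem norm_logApprox_apply_le (ht : 0 ≤ t) (hK0 : 0 ≤ K)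
    (hK : ∀ s, 0 ≤ s → ∀ u, ‖T s u - u‖ ≤ K * s * ‖u‖) (n : ℕ) (f : X →ᵇ ℝ) :
    ‖logApprox T t n f‖ ≤ K * t * ‖f‖ := by
  rcases n.eq_zero_or_pos with rfl | hn
  · simp only [logApprox_apply, Nat.cast_zero, zero_smul, norm_zero]
    positivity
  rw [logApprox_apply, norm_smul, Real.norm_natCast]
  calc (n : ℝ) * ‖T (t / n) f - f‖ ≤ n * (K * (t / n) * ‖f‖) := by
        gcongr
        exact hK _ (by positivity) f
    _ = K * t * ‖f‖ := by field_simp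

theorem IsSublinearSemigroup.norm_logApprox_sub_logApprox_mul_le (hT : IsSublinearSemigroup T)
    (ht : 0 ≤ t) (hK0 : 0 ≤ K) (hK : ∀ s, 0 ≤ s → ∀ u, ‖T s u - u‖ ≤ K * s * ‖u‖)
    {n m : ℕ} (hn : 0 < n) (hm : 0 < m) (f : X →ᵇ ℝ) :
    ‖logApprox T t n f - logApprox T t (n * m) f‖ ≤ K ^ 2 * t ^ 2 / n * ‖f‖ := by
  set h := t / (n * m : ℕ)
  have hh : 0 ≤ h := by positivity
  have hmh : (m : ℝ) * h = t / n := by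
    simp only [h, Nat.cast_mul]
    field_simp
  have hb (s : ℝ) (hs : 0 ≤ s) (hsn : s ≤ t / n) (u : X →ᵇ ℝ) :
      ‖T s u - u‖ ≤ K * (t / n) * ‖u‖ :=
    (hK s hs u).trans (by gcongr)
  have htel := hT.norm_apply_sub_sub_smul_le (by positivity) hh hb m hmh.le f
  rw [hmh] at htel
  have hsplit : logApprox T t n f - logApprox T t (n * m) f =
      (n : ℝ) • (T (t / n) f - f - (m : ℝ) • (T h f - f)) := by
    simp only [logApprox_apply, h, Nat.cast_mul]
    module
  rw [hsplit, norm_smul, Real.norm_natCast]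
  calc (n : ℝ) * ‖T (t / n) f - f - (m : ℝ) • (T h f - f)‖
      ≤ n * (m * (K * (t / n)) * (K * h * ‖f‖)) := by
        gcongr
        exact htel.trans (by gcongr; exact hK h hh f)
    _ = K ^ 2 * t ^ 2 / n * ‖f‖ := by
        simp only [h, Nat.cast_mul]
        field_simp

theorem IsSublinearSemigroup.norm_logApprox_sub_logApprox_le (hT : IsSublinearSemigroup T)
    (ht : 0 ≤ t) (hK0 : 0 ≤ K) (hK : ∀ s, 0 ≤ s → ∀ u, ‖T s u - u‖ ≤ K * s * ‖u‖)
    {n m : ℕ} (hn : 0 < n) (hm : 0 < m) (f : X →ᵇ ℝ) :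
    ‖logApprox T t n f - logApprox T t m f‖ ≤ (K ^ 2 * t ^ 2 / n + K ^ 2 * t ^ 2 / m) * ‖f‖ := by
  have hnm := hT.norm_logApprox_sub_logApprox_mul_le ht hK0 hK hn hm f
  have hmn := hT.norm_logApprox_sub_logApprox_mul_le ht hK0 hK hm hn f
  rw [mul_comm m n] at hmn
  calc _ ≤ ‖logApprox T t n f - logApprox T t (n * m) f‖ +
        ‖logApprox T t m f - logApprox T t (n * m) f‖ := by
          simpa only [dist_eq_norm] using dist_triangle_right (logApprox T t n f) _ _
    _ ≤ _ := by linarith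

end LogApprox

theorem stmt_15_general {X : Type*} [TopologicalSpace X]
    (T : ℝ → Op X)
    (hT : ∀ t : ℝ, 0 ≤ t → IsSublinearTransition (T t))
    (hT0 : T 0 = id)
    (hTsg : ∀ s t : ℝ, 0 ≤ s → 0 ≤ t → T (s + t) = T s ∘ T t)
    (hUC : IsUniformlyContinuousSG T) (t : ℝ) (ht : 0 ≤ t) :
    (∀ ε : ℝ≥0∞, 0 < ε → ∃ N : ℕ, ∀ m ≥ N, ∀ n ≥ N,
        opSemiNorm ((m : ℝ) • (T (t / m) - id) - (n : ℝ) • (T (t / n) - id)) < ε) ∧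
    ∃ L : Op X, IsSublinearRate L ∧ opSemiNorm L ≠ ⊤ ∧
      Tendsto (fun n : ℕ => opSemiNorm ((n : ℝ) • (T (t / n) - id) - L)) atTop (nhds 0) := by
  have hT' : IsSublinearSemigroup T := ⟨hT, hT0, hTsg⟩
  obtain ⟨K, hK0, hK⟩ := hT'.exists_norm_apply_sub_le hUC
  set C := K ^ 2 * t ^ 2
  have hC : Tendsto (fun n : ℕ => C / n) atTop (𝓝 0) := tendsto_const_div_atTop_nhds_zero_nat C
  choose L hL hrate using fun f => exists_tendsto_dist_le_of_dist_le_add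
    (a := fun n => logApprox T t n f) (N := 1) (by simpa using hC.mul_const ‖f‖)
    fun n hn m hm => by
      rw [dist_eq_norm, ← add_mul]
      exact hT'.norm_logApprox_sub_logApprox_le ht hK0 hK hn hm f
  refine ⟨fun ε hε => exists_opSemiNorm_sub_lt_of_le (C := C) (fun n m hn hm => ?_) hε, L,
    isSublinearRate_of_tendsto (hT'.isSublinearRate_logApprox ht) hL, ?_, ?_⟩
  · exact opSemiNorm_le_ofReal (by positivity)
      (hT'.norm_logApprox_sub_logApprox_le ht hK0 hK hn hm)
  · refine ne_top_of_le_ne_top ENNReal.ofReal_ne_top (opSemiNorm_le_ofReal (c := K * t)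
      (by positivity) fun f => le_of_tendsto' (hL f).norm fun n => ?_)
    exact norm_logApprox_apply_le ht hK0 hK n f
  · refine tendsto_of_tendsto_of_tendsto_of_le_of_le' tendsto_const_nhds
      (by simpa using ENNReal.tendsto_ofReal hC) (Eventually.of_forall fun _ => zero_le) ?_
    filter_upwards [eventually_ge_atTop 1] with n hn
    refine opSemiNorm_le_ofReal (by positivity) fun f => ?_
    exact (dist_eq_norm _ _).symm.trans_le (hrate f n hn)

theorem stmt_15 {X : Type*} [Countable X] [TopologicalSpace X] [DiscreteTopology X]
    (T : ℝ → Op X)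
    (hT : ∀ t : ℝ, 0 ≤ t → IsSublinearTransition (T t))
    (hT0 : T 0 = id)
    (hTsg : ∀ s t : ℝ, 0 ≤ s → 0 ≤ t → T (s + t) = T s ∘ T t)
    (hUC : IsUniformlyContinuousSG T) (t : ℝ) (ht : 0 ≤ t) :
    (∀ ε : ℝ≥0∞, 0 < ε → ∃ N : ℕ, ∀ m ≥ N, ∀ n ≥ N,
        opSemiNorm ((m : ℝ) • (T (t / m) - id) - (n : ℝ) • (T (t / n) - id)) < ε) ∧
    ∃ L : Op X, IsSublinearRate L ∧ opSemiNorm L ≠ ⊤ ∧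
      Tendsto (fun n : ℕ => opSemiNorm ((n : ℝ) • (T (t / n) - id) - L)) atTop (nhds 0) :=
  stmt_15_general T hT hT0 hTsg hUC t ht
end

section
/- Let (T_t)_{t≥0} be a uniformly continuous semigroup of sublinear transition operators on ℬ, fix t ≥ 0, and let ln T_t denote the limit in operator seminorm of the sequence (n(T_{t/n} − I))_{n∈ℕ}. Then the sequence ((I + (1/n)·ln T_t)^n)_{n∈ℕ} converges in operator seminorm to T_t; that is, T_t equals the operator exponential of ln T_t. -/
open Filter Topology BoundedContinuousFunction ENNReal NNReal

/-! Put `S = T (t / n)` and `J = I + L / n`, so that `T t = S^n` by the semigroup law and the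
Euler approximant is `J^n`. A sublinear transition operator is `1`-Lipschitz, `‖J‖ ≤ 1 + ‖L‖ / n`
and `‖S - J‖ ≤ ‖n (S - I) - L‖ / n`; telescoping `S^n - J^n` one factor at a time gives
`‖S^n - J^n‖ ≤ (1 + ‖L‖ / n)^n ‖n (S - I) - L‖ ≤ exp ‖L‖ · ‖n (S - I) - L‖ → 0`.
The norm `‖L‖` is finite because `L` is the limit of the bounded operators `n (S - I)`. -/

section OperatorSeminorm

variable {X : Type*} [TopologicalSpace X]

theorem opSemiNorm_le_coe_of_norm_le {A : Op X} {C : ℝ≥0} (h : ∀ f, ‖A f‖ ≤ C * ‖f‖) :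
    opSemiNorm A ≤ C := by
  refine iSup₂_le fun f hf => ?_
  rw [ENNReal.div_le_iff (by simpa using hf) ENNReal.coe_ne_top, ← ENNReal.coe_mul,
    ENNReal.coe_le_coe, ← NNReal.coe_le_coe]
  exact_mod_cast h f

theorem norm_apply_le_of_opSemiNorm_le_coe {A : Op X} (hA : A 0 = 0) {C : ℝ≥0}
    (h : opSemiNorm A ≤ C) (f : X →ᵇ ℝ) : ‖A f‖ ≤ C * ‖f‖ := by
  rcases eq_or_ne f 0 with rfl | hf
  · simp [hA]
  have hquot : (‖A f‖₊ : ℝ≥0∞) / ‖f‖₊ ≤ C :=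
    (le_iSup₂ (f := fun g (_ : g ≠ 0) => (‖A g‖₊ : ℝ≥0∞) / ‖g‖₊) f hf).trans h
  rw [ENNReal.div_le_iff (by simpa using hf) ENNReal.coe_ne_top, ← ENNReal.coe_mul,
    ENNReal.coe_le_coe, ← NNReal.coe_le_coe] at hquot
  exact_mod_cast hquot

theorem opSemiNorm_sub_le_opDist (A B : Op X) : opSemiNorm (A - B) ≤ opDist A B :=
  le_add_self

theorem map_zero_of_tendsto_opDist {A : ℕ → Op X} {L : Op X} (hA : ∀ n, A n 0 = 0)
    (h : Tendsto (fun n => opDist (A n) L) atTop (𝓝 0)) : L 0 = 0 := by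
  have hle : ∀ n, (‖L 0‖₊ : ℝ≥0∞) ≤ opDist (A n) L := fun n =>
    calc (‖L 0‖₊ : ℝ≥0∞) = ‖A n 0 - L 0‖₊ := by simp [hA n]
      _ ≤ opDist (A n) L := le_self_add
  simpa using ge_of_tendsto' h hle

theorem exists_norm_le_of_tendsto_opDist {A : ℕ → Op X} {L : Op X} (hA : ∀ n, A n 0 = 0)
    (hAb : ∀ n, ∃ K : ℝ≥0, ∀ f, ‖A n f‖ ≤ K * ‖f‖)
    (h : Tendsto (fun n => opDist (A n) L) atTop (𝓝 0)) :
    ∃ M : ℝ≥0, ∀ f, ‖L f‖ ≤ M * ‖f‖ := by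
  obtain ⟨N, hN⟩ := (h.eventually (gt_mem_nhds zero_lt_one)).exists
  obtain ⟨K, hK⟩ := hAb N
  have hdiff : ∀ f, ‖A N f - L f‖ ≤ ‖f‖ := by
    have hsub : (A N - L) 0 = 0 := by simp [hA, map_zero_of_tendsto_opDist hA h]
    simpa using norm_apply_le_of_opSemiNorm_le_coe hsub (C := 1)
      ((opSemiNorm_sub_le_opDist _ _).trans (by simpa using hN.le))
  refine ⟨K + 1, fun f => ?_⟩
  calc ‖L f‖ = ‖A N f - (A N f - L f)‖ := by rw [_root_.sub_sub_cancel]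
    _ ≤ ‖A N f‖ + ‖A N f - L f‖ := norm_sub_le _ _
    _ ≤ K * ‖f‖ + ‖f‖ := add_le_add (hK f) (hdiff f)
    _ = ((K + 1 : ℝ≥0) : ℝ) * ‖f‖ := by push_cast; ring

end OperatorSeminorm

namespace IsSublinearTransition

variable {X : Type*} [TopologicalSpace X] {T : Op X}

theorem map_zero_s17 (hT : IsSublinearTransition T) : T 0 = 0 := by
  simpa using hT.1 0 le_rfl 0

theorem apply_sub_apply_le (hT : IsSublinearTransition T) (f g : X →ᵇ ℝ) (x : X) :
    T f x - T g x ≤ ‖f - g‖ := by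
  have : Nonempty X := ⟨x⟩
  have hsub : T f x ≤ T g x + T (f - g) x := by
    simpa using hT.2.1 g (f - g) x
  have hsup : T (f - g) x ≤ ‖f - g‖ :=
    (hT.2.2 (f - g) x).trans (ciSup_le fun y => (le_abs_self _).trans ((f - g).norm_coe_le_norm y))
  linarith

theorem lipschitzWith_one (hT : IsSublinearTransition T) : LipschitzWith 1 T := by
  refine LipschitzWith.mk_one fun f g => ?_
  rw [dist_eq_norm, dist_eq_norm, BoundedContinuousFunction.norm_le (norm_nonneg _)]
  intro x
  rw [BoundedContinuousFunction.coe_sub, Pi.sub_apply, Real.norm_eq_abs, abs_sub_le_iff]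
  exact ⟨hT.apply_sub_apply_le f g x, (hT.apply_sub_apply_le g f x).trans_eq (norm_sub_rev _ _)⟩

end IsSublinearTransition

theorem iterate_eq_natCast_mul {α : Type*} {T : ℝ → α → α} (hT0 : T 0 = id)
    (hTsg : ∀ s t : ℝ, 0 ≤ s → 0 ≤ t → T (s + t) = T s ∘ T t) {s : ℝ} (hs : 0 ≤ s) (k : ℕ) :
    (T s)^[k] = T (k * s) := by
  induction k with
  | zero => simpa using hT0.symm
  | succ k ih =>
    rw [Function.iterate_succ', ih, ← hTsg s _ hs (by positivity)]
    push_cast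
    ring_nf

theorem norm_iterate_le_pow {E : Type*} [SeminormedAddCommGroup E] {J : E → E} {c : ℝ}
    (hc : 0 ≤ c) (hJ : ∀ f, ‖J f‖ ≤ c * ‖f‖) (k : ℕ) (f : E) : ‖J^[k] f‖ ≤ c ^ k * ‖f‖ := by
  induction k with
  | zero => simp
  | succ k ih =>
    rw [Function.iterate_succ_apply', pow_succ']
    calc ‖J (J^[k] f)‖ ≤ c * ‖J^[k] f‖ := hJ _
      _ ≤ c * (c ^ k * ‖f‖) := by gcongr
      _ = c * c ^ k * ‖f‖ := by ring

theorem norm_iterate_sub_iterate_le {E : Type*} [SeminormedAddCommGroup E] {S J : E → E}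
    (hS : LipschitzWith 1 S) {c δ : ℝ} (hc : 1 ≤ c) (hδ : 0 ≤ δ)
    (hJ : ∀ f, ‖J f‖ ≤ c * ‖f‖) (hSJ : ∀ f, ‖S f - J f‖ ≤ δ * ‖f‖) (k : ℕ) (f : E) :
    ‖S^[k] f - J^[k] f‖ ≤ k * δ * c ^ k * ‖f‖ := by
  induction k with
  | zero => simp
  | succ k ih =>
    rw [Function.iterate_succ_apply', Function.iterate_succ_apply']
    have hSlip : ‖S (S^[k] f) - S (J^[k] f)‖ ≤ ‖S^[k] f - J^[k] f‖ := by
      simpa [dist_eq_norm] using hS.dist_le_mul (S^[k] f) (J^[k] f)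
    have hstep : ‖S (J^[k] f) - J (J^[k] f)‖ ≤ δ * (c ^ k * ‖f‖) :=
      (hSJ _).trans (by gcongr; exact norm_iterate_le_pow (by linarith) hJ k f)
    calc ‖S (S^[k] f) - J (J^[k] f)‖
        ≤ ‖S (S^[k] f) - S (J^[k] f)‖ + ‖S (J^[k] f) - J (J^[k] f)‖ :=
          norm_sub_le_norm_sub_add_norm_sub _ _ _
      _ ≤ k * δ * c ^ k * ‖f‖ + δ * (c ^ k * ‖f‖) := add_le_add (hSlip.trans ih) hstep
      _ = (k + 1) * δ * c ^ k * ‖f‖ := by ring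
      _ ≤ (k + 1) * δ * c ^ (k + 1) * ‖f‖ := by gcongr; omega
      _ = ((k + 1 : ℕ) : ℝ) * δ * c ^ (k + 1) * ‖f‖ := by push_cast; ring

theorem one_add_div_pow_le_exp {x : ℝ} (hx : 0 ≤ x) (n : ℕ) : (1 + x / n) ^ n ≤ Real.exp x := by
  rcases eq_or_ne n 0 with rfl | hn
  · simpa using Real.one_le_exp hx
  calc (1 + x / n) ^ n ≤ Real.exp (n * (x / n)) := by
        simpa using Real.prod_one_add_le_exp_sum (Finset.range n) (f := fun _ => x / n)
          fun _ => by positivity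
    _ = Real.exp x := by rw [mul_div_cancel₀ x (Nat.cast_ne_zero.2 hn)]

theorem exists_norm_smul_sub_id_le {E : Type*} [SeminormedAddCommGroup E] [NormedSpace ℝ E]
    {S : E → E} (hS : LipschitzWith 1 S) (hS0 : S 0 = 0) (c : ℝ) :
    ∃ K : ℝ≥0, ∀ f, ‖(c • (S - id) : E → E) f‖ ≤ K * ‖f‖ := by
  refine ⟨‖c‖₊ * 2, fun f => ?_⟩
  have hSf : ‖S f‖ ≤ ‖f‖ := by simpa using hS.norm_le_mul hS0 f
  calc ‖(c • (S - id) : E → E) f‖ = ‖c‖ * ‖S f - f‖ := norm_smul c _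
    _ ≤ ‖c‖ * (‖S f‖ + ‖f‖) := by gcongr; exact norm_sub_le _ _
    _ ≤ ‖c‖ * (‖f‖ + ‖f‖) := by gcongr
    _ = ((‖c‖₊ * 2 : ℝ≥0) : ℝ) * ‖f‖ := by push_cast; ring

section EulerApproximation

variable {X : Type*} [TopologicalSpace X]

theorem opSemiNorm_euler_sub_iterate_le {S L : Op X} (hS : LipschitzWith 1 S) (hS0 : S 0 = 0)
    (hL0 : L 0 = 0) {M : ℝ≥0} (hM : ∀ f, ‖L f‖ ≤ M * ‖f‖) {n : ℕ} (hn : n ≠ 0) :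
    opSemiNorm (euler L 1 n - S^[n]) ≤
      ENNReal.ofReal (Real.exp M) * opSemiNorm ((n : ℝ) • (S - id) - L) := by
  set D : Op X := (n : ℝ) • (S - id) - L
  by_cases hD : opSemiNorm D = ⊤
  · rw [hD, ENNReal.mul_top (by simpa using Real.exp_pos M)]
    exact le_top
  obtain ⟨η, hη⟩ : ∃ η : ℝ≥0, (η : ℝ≥0∞) = opSemiNorm D := ⟨_, ENNReal.coe_toNNReal hD⟩
  have hn' : (0 : ℝ) < n := by positivity
  set J : Op X := fun f => f + (1 / (n : ℝ)) • L f
  have hJ : ∀ f, ‖J f‖ ≤ (1 + M / n) * ‖f‖ := fun f =>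
    calc ‖f + (1 / (n : ℝ)) • L f‖ ≤ ‖f‖ + (1 / n) * ‖L f‖ := by
          grw [norm_add_le, norm_smul, Real.norm_of_nonneg (by positivity)]
      _ ≤ ‖f‖ + (1 / n) * (M * ‖f‖) := by grw [hM f]
      _ = (1 + M / n) * ‖f‖ := by ring
  have hSJ : ∀ f, ‖S f - J f‖ ≤ η / n * ‖f‖ := fun f => by
    have hDf : ‖D f‖ ≤ η * ‖f‖ :=
      norm_apply_le_of_opSemiNorm_le_coe (by simp [D, hS0, hL0]) hη.ge f
    have hdiff : S f - J f = (1 / (n : ℝ)) • D f := by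
      simp only [D, J, Pi.sub_apply, Pi.smul_apply, id, smul_sub, smul_smul,
        one_div_mul_cancel hn'.ne', one_smul]
      abel
    calc ‖S f - J f‖ = 1 / n * ‖D f‖ := by
          rw [hdiff, norm_smul, Real.norm_of_nonneg (by positivity)]
      _ ≤ 1 / n * (η * ‖f‖) := by gcongr
      _ = η / n * ‖f‖ := by ring
  have hcomp := norm_iterate_sub_iterate_le hS (by simp; positivity) (by positivity) hJ hSJ n
  rw [← hη, ENNReal.ofReal, ← ENNReal.coe_mul]
  refine opSemiNorm_le_coe_of_norm_le fun f => ?_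
  calc ‖(euler L 1 n - S^[n]) f‖ = ‖S^[n] f - J^[n] f‖ := norm_sub_rev _ _
    _ ≤ n * (η / n) * (1 + M / n) ^ n * ‖f‖ := hcomp f
    _ = η * (1 + M / n) ^ n * ‖f‖ := by field_simp
    _ ≤ η * Real.exp M * ‖f‖ := by gcongr; exact one_add_div_pow_le_exp M.2 n
    _ = ((Real.toNNReal (Real.exp M) * η : ℝ≥0) : ℝ) * ‖f‖ := by
      rw [NNReal.coe_mul, Real.coe_toNNReal _ (Real.exp_pos M).le]; ring

end EulerApproximation

theorem stmt_17_general {X : Type*} [TopologicalSpace X]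
    (T : ℝ → Op X)
    (hT : ∀ t : ℝ, 0 ≤ t → IsSublinearTransition (T t))
    (hT0 : T 0 = id)
    (hTsg : ∀ s t : ℝ, 0 ≤ s → 0 ≤ t → T (s + t) = T s ∘ T t)
    (t : ℝ) (ht : 0 ≤ t)
    (L : Op X)
    (hL : Tendsto (fun n : ℕ => opDist ((n : ℝ) • (T (t / n) - id)) L) atTop (nhds 0)) :
    Tendsto (fun n : ℕ => opSemiNorm (euler L 1 n - T t)) atTop (nhds 0) := by
  have hTn : ∀ n : ℕ, IsSublinearTransition (T (t / n)) := fun n => hT _ (by positivity)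
  have hA0 : ∀ n : ℕ, ((n : ℝ) • (T (t / n) - id) : Op X) 0 = 0 := fun n => by
    simp [(hTn n).map_zero_s17]
  have hL0 : L 0 = 0 := map_zero_of_tendsto_opDist hA0 hL
  obtain ⟨M, hM⟩ := exists_norm_le_of_tendsto_opDist hA0
    (fun n => exists_norm_smul_sub_id_le (hTn n).lipschitzWith_one (hTn n).map_zero_s17 n) hL
  have hdiff : Tendsto (fun n : ℕ => opSemiNorm ((n : ℝ) • (T (t / n) - id) - L)) atTop (𝓝 0) :=
    tendsto_of_tendsto_of_tendsto_of_le_of_le tendsto_const_nhds hL (fun _ => zero_le)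
      fun _ => opSemiNorm_sub_le_opDist _ _
  have hbound := ENNReal.Tendsto.const_mul (a := ENNReal.ofReal (Real.exp M)) hdiff
    (Or.inr ENNReal.ofReal_ne_top)
  rw [mul_zero] at hbound
  refine tendsto_of_tendsto_of_tendsto_of_le_of_le' tendsto_const_nhds hbound
    (Eventually.of_forall fun _ => zero_le) ?_
  filter_upwards [eventually_ne_atTop 0] with n hn
  have hTt : T t = (T (t / n))^[n] := by
    rw [iterate_eq_natCast_mul hT0 hTsg (by positivity), mul_div_cancel₀ t (Nat.cast_ne_zero.2 hn)]
  rw [hTt]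
  exact opSemiNorm_euler_sub_iterate_le (hTn n).lipschitzWith_one (hTn n).map_zero_s17 hL0 hM hn

theorem stmt_17 {X : Type*} [Countable X] [TopologicalSpace X] [DiscreteTopology X]
    (T : ℝ → Op X)
    (hT : ∀ t : ℝ, 0 ≤ t → IsSublinearTransition (T t))
    (hT0 : T 0 = id)
    (hTsg : ∀ s t : ℝ, 0 ≤ s → 0 ≤ t → T (s + t) = T s ∘ T t)
    (hUC : IsUniformlyContinuousSG T) (t : ℝ) (ht : 0 ≤ t)
    (L : Op X)
    (hL : Tendsto (fun n : ℕ => opDist ((n : ℝ) • (T (t / n) - id)) L) atTop (nhds 0)) :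
    Tendsto (fun n : ℕ => opSemiNorm (euler L 1 n - T t)) atTop (nhds 0) :=
  stmt_17_general T hT hT0 hTsg t ht L hL
end
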